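/- arXiv:0811.1978 — 4 statements merged into one kernel-verified Lean document; each statement's English description precedes it below -/
import Mathlib

section
/- Let X and G be complex Banach spaces and for each n = 0,1,2,... let π_n : X → G be a continuous homogeneous polynomial of degree n. If for every x ∈ X there exists ε_x > 0 such that sup_n ‖π_n(ε_x x)‖ < ∞, then there exists ε > 0 such that sup_n sup_{‖x‖ < ε} ‖π_n(x)‖ < ∞. -/
open Complex Finset

namespace Aux

variable {X G : Type*} [NormedAddCommGroup X] [NormedSpace ℂ X]
  [NormedAddCommGroup G] [NormedSpace ℂ G]

/-- Expansion of a homogeneous polynomial along `a + t • y`. -/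
lemma expand_lemma (n : ℕ) (l : ContinuousMultilinearMap ℂ (fun _ : Fin n => X) G)
    (a y : X) (t : ℂ) :
    l (fun _ => a + t • y) =
      ∑ s : Finset (Fin n), t ^ s.card •
        l (s.piecewise (fun _ => y) (fun _ => a)) := by
  classical
  have h1 : (fun _ : Fin n => a + t • y)
      = (fun _ : Fin n => t • y) + (fun _ : Fin n => a) := by
    ext i; simp [add_comm]
  rw [h1]
  rw [show (l ((fun _ : Fin n => t • y) + fun _ : Fin n => a))
      = l.toMultilinearMap ((fun _ : Fin n => t • y) + fun _ : Fin n => a) from rfl,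
    MultilinearMap.map_add_univ]
  refine Finset.sum_congr rfl fun s _ => ?_
  have h2 : s.piecewise (fun _ : Fin n => t • y) (fun _ => a)
      = s.piecewise (fun i => t • (s.piecewise (fun _ : Fin n => y) (fun _ => a)) i)
          (s.piecewise (fun _ : Fin n => y) (fun _ => a)) := by
    ext i
    by_cases h : i ∈ s <;>
      simp [Finset.piecewise_eq_of_mem _ _ _ , Finset.piecewise, h]
  rw [h2]
  rw [show ∀ v, l.toMultilinearMap v = l v from fun _ => rfl] at *
  rw [show l (s.piecewise (fun i => t • (s.piecewise (fun _ : Fin n => y) (fun _ => a)) i)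
          (s.piecewise (fun _ : Fin n => y) (fun _ => a)))
      = l.toMultilinearMap (s.piecewise
          (fun i => (fun _ : Fin n => t) i • (s.piecewise (fun _ : Fin n => y) (fun _ => a)) i)
          (s.piecewise (fun _ : Fin n => y) (fun _ => a))) from rfl,
    MultilinearMap.map_piecewise_smul]
  simp

/-- Polarization-style identity via roots of unity. -/
lemma polarization (n : ℕ) (l : ContinuousMultilinearMap ℂ (fun _ : Fin n => X) G)
    (a y : X) :
    ∑ j ∈ Finset.range (n+1),
        (Complex.exp (2 * Real.pi * I / (n+1))) ^ j •
          l (fun _ => a + (Complex.exp (2 * Real.pi * I / (n+1))) ^ j • y)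
      = ((n : ℂ)+1) • l (fun _ => y) := by
  classical
  set ω : ℂ := Complex.exp (2 * Real.pi * I / (n+1)) with hω
  have hζ : IsPrimitiveRoot ω (n+1) := by
    have h := Complex.isPrimitiveRoot_exp (n+1) (Nat.succ_ne_zero n)
    rw [hω]
    convert h using 3
    push_cast; ring
  calc ∑ j ∈ Finset.range (n+1), ω ^ j • l (fun _ => a + ω ^ j • y)
      = ∑ j ∈ Finset.range (n+1), ∑ s : Finset (Fin n),
          (ω ^ (s.card + 1)) ^ j • l (s.piecewise (fun _ => y) (fun _ => a)) := by
        refine Finset.sum_congr rfl fun j _ => ?_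
        rw [expand_lemma n l a y (ω ^ j), Finset.smul_sum]
        refine Finset.sum_congr rfl fun s _ => ?_
        rw [smul_smul]
        congr 1
        rw [← pow_succ', ← pow_mul, mul_comm j, pow_mul]
    _ = ∑ s : Finset (Fin n), (∑ j ∈ Finset.range (n+1), (ω ^ (s.card + 1)) ^ j) •
          l (s.piecewise (fun _ => y) (fun _ => a)) := by
        rw [Finset.sum_comm]
        simp [Finset.sum_smul]
    _ = ((n : ℂ)+1) • l (fun _ => y) := by
        rw [Finset.sum_eq_single Finset.univ]
        · have hc : (Finset.univ : Finset (Fin n)).card = n := by simp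
          rw [hc]
          have : ω ^ (n + 1) = 1 := hζ.pow_eq_one
          simp [this, Finset.piecewise_univ]
        · intro s _ hs
          have hcard : s.card < n := lt_of_le_of_ne (by simpa using Finset.card_le_univ s)
            (fun h => hs (Finset.eq_univ_of_card s (by simpa using h)))
          have hne : ω ^ (s.card + 1) ≠ 1 :=
            hζ.pow_ne_one_of_pos_of_lt (Nat.succ_ne_zero _) (by omega)
          rw [geom_sum_eq hne]
          have : (ω ^ (s.card + 1)) ^ (n + 1) = 1 := by
            rw [← pow_mul, mul_comm, pow_mul, hζ.pow_eq_one, one_pow]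
          rw [this]
          simp
        · simp

lemma homog (n : ℕ) (l : ContinuousMultilinearMap ℂ (fun _ : Fin n => X) G) (c : ℂ) (x : X) :
    l (fun _ => c • x) = c ^ n • l (fun _ => x) := by
  have := l.map_smul_univ (fun _ : Fin n => c) (fun _ => x)
  simpa using this

end Aux

open Aux in
/-- If `π_n : X → G` are continuous homogeneous polynomials of degree `n`
between complex Banach spaces which, for every `x`, are uniformly bounded on some multiple
`ε_x • x`, then they are uniformly bounded on a fixed ball around the origin. -/
theorem uniform_bound_of_pointwise_bound
    (X G : Type*) [NormedAddCommGroup X] [NormedSpace ℂ X] [CompleteSpace X]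
    [NormedAddCommGroup G] [NormedSpace ℂ G] [CompleteSpace G]
    (π : ∀ _ : ℕ, X → G)
    (hpoly : ∀ n : ℕ, ∃ l : ContinuousMultilinearMap ℂ (fun _ : Fin n => X) G,
      ∀ x : X, π n x = l (fun _ => x))
    (hbd : ∀ x : X, ∃ εx > (0 : ℝ), ∃ C : ℝ, ∀ n : ℕ, ‖π n (εx • x)‖ ≤ C) :
    ∃ ε > (0 : ℝ), ∃ C : ℝ, ∀ n : ℕ, ∀ x : X, ‖x‖ < ε → ‖π n x‖ ≤ C := by
  classical
  choose l hl using hpoly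
  set A : ℕ → Set X :=
    fun m => {x | ∀ n : ℕ, ‖π n ((((m : ℝ) + 1)⁻¹) • x)‖ ≤ (m : ℝ) + 1} with hA
  have hcont : ∀ n : ℕ, Continuous (π n) := by
    intro n
    have : π n = fun x => l n (fun _ => x) := funext (hl n)
    rw [this]
    exact (l n).cont.comp (continuous_pi fun _ => continuous_id)
  have hclosed : ∀ m, IsClosed (A m) := by
    intro m
    have : A m = ⋂ n : ℕ, {x | ‖π n ((((m : ℝ) + 1)⁻¹) • x)‖ ≤ (m : ℝ) + 1} := by
      ext x; simp [hA, Set.mem_iInter]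
    rw [this]
    exact isClosed_iInter fun n => isClosed_le
      (((hcont n).comp (continuous_const_smul _)).norm) continuous_const
  have hhomog : ∀ (n : ℕ) (c : ℝ) (z : X), π n (c • z) = (c : ℂ) ^ n • π n z := by
    intro n c z
    rw [hl n, hl n, ← homog n (l n) (c : ℂ) z]
    congr 1
  have hcover : (⋃ m, A m) = Set.univ := by
    rw [Set.eq_univ_iff_forall]
    intro x
    obtain ⟨εx, hεx, C, hC⟩ := hbd x
    set m : ℕ := ⌈max εx⁻¹ C⌉₊ with hm
    have hmc : max εx⁻¹ C ≤ (m : ℝ) := Nat.le_ceil _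
    have hm1 : εx⁻¹ ≤ (m : ℝ) + 1 := le_trans (le_trans (le_max_left _ _) hmc) (by linarith)
    have hm2 : C ≤ (m : ℝ) + 1 := le_trans (le_trans (le_max_right _ _) hmc) (by linarith)
    refine Set.mem_iUnion.2 ⟨m, fun n => ?_⟩
    set c : ℝ := (((m : ℝ) + 1) * εx)⁻¹ with hc
    have hmpos : (0 : ℝ) < (m : ℝ) + 1 := by positivity
    have hc0 : 0 < c := by positivity
    have hc1 : c ≤ 1 := by
      rw [hc, inv_le_one_iff₀]
      right
      calc (1 : ℝ) = εx⁻¹ * εx := by field_simp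
        _ ≤ (((m : ℝ) + 1)) * εx := by
            apply mul_le_mul_of_nonneg_right _ hεx.le
            linarith
    have hx : (((m : ℝ) + 1)⁻¹) • x = c • (εx • x) := by
      rw [smul_smul, hc]
      congr 1
      field_simp
    rw [hx, hhomog n c (εx • x), norm_smul, norm_pow]
    have hnc : ‖(c : ℂ)‖ = c := by
      rw [Complex.norm_real, Real.norm_eq_abs, abs_of_pos hc0]
    rw [hnc]
    calc c ^ n * ‖π n (εx • x)‖ ≤ 1 * C := by
          apply mul_le_mul (pow_le_one₀ hc0.le hc1) (hC n) (norm_nonneg _) zero_le_one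
      _ ≤ (m : ℝ) + 1 := by linarith
  obtain ⟨m, x₀, hx₀⟩ := nonempty_interior_of_iUnion_of_closed hclosed hcover
  obtain ⟨r, hr, hball⟩ := Metric.mem_nhds_iff.1 (mem_interior_iff_mem_nhds.1 hx₀)
  set c : ℝ := ((m : ℝ) + 1)⁻¹ with hc
  have hc0 : 0 < c := by positivity
  set a : X := c • x₀ with ha
  set ρ : ℝ := c * r with hρ
  have hρ0 : 0 < ρ := by positivity
  have hballbd : ∀ (n : ℕ) (z : X), ‖z - a‖ < ρ → ‖π n z‖ ≤ (m : ℝ) + 1 := by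
    intro n z hz
    have hmem : c⁻¹ • z ∈ Metric.ball x₀ r := by
      rw [Metric.mem_ball, dist_eq_norm]
      have h1 : c⁻¹ • z - x₀ = c⁻¹ • (z - a) := by
        rw [smul_sub, ha, smul_smul, inv_mul_cancel₀ hc0.ne', one_smul]
      rw [h1, norm_smul, Real.norm_eq_abs, abs_of_pos (by positivity)]
      calc c⁻¹ * ‖z - a‖ < c⁻¹ * ρ := by
            exact mul_lt_mul_of_pos_left hz (by positivity)
        _ = r := by rw [hρ]; field_simp
    have h2 := hball hmem n
    rw [← hc, smul_smul, mul_inv_cancel₀ hc0.ne', one_smul] at h2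
    exact h2
  refine ⟨ρ, hρ0, (m : ℝ) + 1, fun n y hy => ?_⟩
  set ω : ℂ := Complex.exp (2 * Real.pi * I / (n + 1)) with hω
  have hωnorm : ‖ω‖ = 1 := by
    rw [hω, show (2 * (Real.pi : ℂ) * I / ((n : ℂ) + 1))
        = ((2 * Real.pi / ((n : ℝ) + 1) : ℝ) : ℂ) * I by push_cast; ring,
      Complex.norm_exp_ofReal_mul_I]
  have hn0 : ((n : ℂ) + 1) ≠ 0 := by
    exact_mod_cast Nat.cast_add_one_ne_zero (R := ℂ) n
  have key := polarization n (l n) a y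
  have h1 : π n y = ((n : ℂ) + 1)⁻¹ •
      ∑ j ∈ Finset.range (n + 1), ω ^ j • l n (fun _ => a + ω ^ j • y) := by
    rw [← hω] at key
    rw [hl n, key, smul_smul, inv_mul_cancel₀ hn0, one_smul]
  rw [h1, norm_smul]
  have hterm : ∀ j ∈ Finset.range (n + 1),
      ‖ω ^ j • l n (fun _ => a + ω ^ j • y)‖ ≤ (m : ℝ) + 1 := by
    intro j _
    rw [norm_smul, norm_pow, hωnorm, one_pow, one_mul, ← hl n]
    apply hballbd
    rw [add_sub_cancel_left, norm_smul, norm_pow, hωnorm, one_pow, one_mul]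
    exact hy
  have hsum : ‖∑ j ∈ Finset.range (n + 1), ω ^ j • l n (fun _ => a + ω ^ j • y)‖
      ≤ ((n : ℝ) + 1) * ((m : ℝ) + 1) := by
    calc ‖∑ j ∈ Finset.range (n + 1), ω ^ j • l n (fun _ => a + ω ^ j • y)‖
        ≤ ∑ j ∈ Finset.range (n + 1), ‖ω ^ j • l n (fun _ => a + ω ^ j • y)‖ :=
          norm_sum_le _ _
      _ ≤ ∑ _j ∈ Finset.range (n + 1), ((m : ℝ) + 1) := Finset.sum_le_sum hterm
      _ = ((n : ℝ) + 1) * ((m : ℝ) + 1) := by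
          rw [Finset.sum_const, Finset.card_range]
          ring
  have hninv : ‖((n : ℂ) + 1)⁻¹‖ = ((n : ℝ) + 1)⁻¹ := by
    rw [norm_inv]
    congr 1
    rw [show ((n : ℂ) + 1) = (((n : ℝ) + 1 : ℝ) : ℂ) by push_cast; ring,
      Complex.norm_real, Real.norm_eq_abs, abs_of_pos (by positivity)]
  rw [hninv]
  calc ((n : ℝ) + 1)⁻¹ * ‖∑ j ∈ Finset.range (n + 1), ω ^ j • l n (fun _ => a + ω ^ j • y)‖
      ≤ ((n : ℝ) + 1)⁻¹ * (((n : ℝ) + 1) * ((m : ℝ) + 1)) := by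
        apply mul_le_mul_of_nonneg_left hsum (by positivity)
    _ = (m : ℝ) + 1 := by field_simp
end

section
/- Let (a_n) be a sequence of nonnegative real numbers. If for every sequence (δ_n) of nonnegative reals tending to zero super-exponentially (i.e. δ_n = o(ε^n) for all ε > 0) the sequence (δ_n a_n) is bounded, then there exists ε > 0 such that (ε^n a_n) is bounded. -/
open Filter Asymptotics

/-- If for every sequence `δ` of nonnegative reals tending to zero
super-exponentially (i.e. `δ n = o(ε ^ n)` for every `ε > 0`) the sequence `δ n * a n` is
bounded, then `ε ^ n * a n` is bounded for some `ε > 0`. -/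
theorem exists_geometric_bound
    (a : ℕ → ℝ) (ha : ∀ n, 0 ≤ a n)
    (h : ∀ δ : ℕ → ℝ, (∀ n, 0 ≤ δ n) →
      (∀ ε > (0 : ℝ), (fun n => δ n) =o[atTop] fun n => ε ^ n) →
      ∃ C : ℝ, ∀ n, δ n * a n ≤ C) :
    ∃ ε > (0 : ℝ), ∃ C : ℝ, ∀ n, ε ^ n * a n ≤ C := by
  classical
  by_contra hcon
  push_neg at hcon
  -- key recursion step
  have key : ∀ t : ℕ, ∀ prev : ℕ, ∃ m, prev < m ∧ (t : ℝ) < ((t : ℝ) + 2)⁻¹ ^ m * a m := by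
    intro t prev
    have hε : (0:ℝ) < ((t:ℝ)+2)⁻¹ := by positivity
    obtain ⟨m, hm⟩ := hcon _ hε ((t:ℝ) + ∑ i ∈ Finset.range (prev+1), ((t:ℝ)+2)⁻¹ ^ i * a i)
    have hsum : (0:ℝ) ≤ ∑ i ∈ Finset.range (prev+1), ((t:ℝ)+2)⁻¹ ^ i * a i :=
      Finset.sum_nonneg (fun i _ => by have := ha i; positivity)
    refine ⟨m, ?_, by linarith⟩
    by_contra hle
    push_neg at hle
    have hsingle : ((t:ℝ)+2)⁻¹ ^ m * a m ≤ ∑ i ∈ Finset.range (prev+1), ((t:ℝ)+2)⁻¹ ^ i * a i :=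
      Finset.single_le_sum (f := fun i => ((t:ℝ)+2)⁻¹ ^ i * a i)
        (fun i _ => by have := ha i; positivity) (Finset.mem_range.mpr (Nat.lt_succ_of_le hle))
    have ht0 : (0:ℝ) ≤ (t:ℝ) := Nat.cast_nonneg t
    linarith
  choose g hg1 hg2 using key
  set F : ℕ → ℕ := fun t => Nat.rec (g 0 0) (fun t prev => g (t+1) prev) t with hF
  have hFs : StrictMono F := strictMono_nat_of_lt_succ (fun t => hg1 (t+1) (F t))
  have hFp : ∀ t : ℕ, (t:ℝ) < ((t:ℝ)+2)⁻¹ ^ (F t) * a (F t) := by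
    intro t
    cases t with
    | zero => exact hg2 0 0
    | succ t => exact hg2 (t+1) (F t)
  set δ : ℕ → ℝ := fun m => if hm : ∃ t, F t = m then ((hm.choose : ℝ)+2)⁻¹ ^ m else 0 with hδ
  have hδ0 : ∀ m, 0 ≤ δ m := by
    intro m
    simp only [hδ]
    split
    · positivity
    · exact le_rfl
  have hδF : ∀ t, δ (F t) = ((t:ℝ)+2)⁻¹ ^ (F t) := by
    intro t
    have hex : ∃ s, F s = F t := ⟨t, rfl⟩
    simp only [hδ, dif_pos hex]
    have : hex.choose = t := hFs.injective hex.choose_spec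
    rw [this]
  have hδo : ∀ ε > (0:ℝ), (fun n => δ n) =o[atTop] fun n => ε ^ n := by
    intro ε hε
    rw [isLittleO_iff]
    intro c hc
    obtain ⟨T, hT⟩ := exists_nat_gt (2/ε)
    obtain ⟨M, hM⟩ := exists_pow_lt_of_lt_one hc (show (1:ℝ)/2 < 1 by norm_num)
    filter_upwards [eventually_ge_atTop (F T), eventually_ge_atTop M] with m hm1 hm2
    have hpos : (0:ℝ) < ε ^ m := pow_pos hε m
    rw [Real.norm_eq_abs, Real.norm_eq_abs, abs_of_nonneg (hδ0 m), abs_of_nonneg hpos.le]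
    simp only [hδ]
    split
    · rename_i hex
      set t := hex.choose with htdef
      have hFt : F t = m := hex.choose_spec
      have htT : T ≤ t := by
        by_contra hlt
        push_neg at hlt
        have := hFs hlt
        omega
      have h2 : ((t:ℝ)+2)⁻¹ ≤ ε/2 := by
        have hTt : (2:ℝ)/ε ≤ (t:ℝ) + 2 := by
          have : (T:ℝ) ≤ (t:ℝ) := Nat.cast_le.mpr htT
          linarith
        have hinv : ((t:ℝ)+2)⁻¹ ≤ ((2:ℝ)/ε)⁻¹ := by
          gcongr
        rwa [inv_div] at hinv
      have h3 : ((t:ℝ)+2)⁻¹ ^ m ≤ (ε/2) ^ m :=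
        pow_le_pow_left₀ (by positivity) h2 m
      have h4 : (ε/2) ^ m = ε ^ m * (1/2) ^ m := by
        rw [div_pow, one_div, inv_pow]
        ring
      have h5 : ((1:ℝ)/2) ^ m ≤ (1/2) ^ M :=
        pow_le_pow_of_le_one (by norm_num) (by norm_num) hm2
      calc ((t:ℝ)+2)⁻¹ ^ m ≤ ε ^ m * (1/2) ^ m := by rw [← h4]; exact h3
        _ ≤ ε ^ m * (1/2) ^ M := by nlinarith
        _ ≤ c * ε ^ m := by nlinarith
    · positivity
  obtain ⟨C, hC⟩ := h δ hδ0 hδo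
  obtain ⟨t, ht⟩ := exists_nat_gt C
  have h1 := hC (F t)
  rw [hδF t] at h1
  have h2 := hFp t
  linarith
end

section
/- Let R be a unique factorization domain, (p) ⊂ R a principal prime ideal, and N ⊂ R^m a finitely generated submodule. Then there exists a free submodule F ⊂ N such that the localizations at (p) coincide: F_{(p)} = N_{(p)} as submodules of R_{(p)}^m. -/
section Aux

variable {R : Type*} [CommRing R] [IsDomain R] [UniqueFactorizationMonoid R]

/-- The localization of a UFD at a principal prime is a PID. -/
theorem aux_isPrincipalIdealRing_localization (p : R) [hP : (Ideal.span {p}).IsPrime] :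
    IsPrincipalIdealRing (Localization (Ideal.span {p}).primeCompl) := by
  classical
  set S := (Ideal.span {p}).primeCompl with hSdef
  set A := Localization S with hAdef
  have hS0 : (0 : R) ∉ S := fun h => h (Ideal.zero_mem _)
  have hSle : S ≤ nonZeroDivisors R := le_nonZeroDivisors_of_noZeroDivisors hS0
  haveI : IsDomain A := IsLocalization.isDomain_of_le_nonZeroDivisors (M := S) (S := A) hSle
  have hinj : Function.Injective (algebraMap R A) := IsLocalization.injective A hSle
  by_cases hp : p = 0
  · -- the localization is the fraction field
    have hfield : IsField A := by
      refine ⟨exists_pair_ne A, mul_comm, ?_⟩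
      intro a ha
      obtain ⟨r, s, rfl⟩ := IsLocalization.exists_mk'_eq S a
      have hr : r ≠ 0 := by
        rintro rfl
        exact ha (IsLocalization.mk'_zero s)
      have hrS : r ∈ S := fun hmem =>
        hr (zero_dvd_iff.mp (Ideal.mem_span_singleton.mp (hp ▸ hmem)))
      exact ⟨IsLocalization.mk' A (s : R) ⟨r, hrS⟩,
        IsLocalization.mk'_mul_mk'_eq_one' _ _ hrS⟩
    letI := hfield.toField
    infer_instance
  · -- the localization is a DVR
    have hp' : Prime p := (Ideal.span_singleton_prime hp).mp hP
    have hq0 : algebraMap R A p ≠ 0 := fun h => hp (hinj (by simpa using h))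
    have hirr : Irreducible (algebraMap R A p) := by
      refine ((Ideal.span_singleton_prime hq0).mp ?_).irreducible
      have hmax : Ideal.span {algebraMap R A p} = IsLocalRing.maximalIdeal A := by
        rw [← Set.image_singleton, ← Ideal.map_span]
        exact Localization.AtPrime.map_eq_maximalIdeal
      rw [hmax]
      exact (IsLocalRing.maximalIdeal.isMaximal A).isPrime
    have hfact : IsDiscreteValuationRing.HasUnitMulPowIrreducibleFactorization A := by
      refine ⟨algebraMap R A p, hirr, ?_⟩
      intro x hx
      obtain ⟨r, s, rfl⟩ := IsLocalization.exists_mk'_eq S x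
      have hr : r ≠ 0 := by
        rintro rfl
        exact hx (IsLocalization.mk'_zero s)
      obtain ⟨n, c, hpc, rfl⟩ := WfDvdMonoid.max_power_factor hr hp'.irreducible
      have hcS : c ∈ S := fun hmem => hpc (Ideal.mem_span_singleton.mp hmem)
      have hu : IsUnit (IsLocalization.mk' A c s) :=
        (IsLocalization.AtPrime.isUnit_mk'_iff A _ c s).mpr hcS
      refine ⟨n, ⟨hu.unit, ?_⟩⟩
      rw [IsUnit.unit_spec, IsLocalization.mk'_eq_mul_mk'_one c s,
        IsLocalization.mk'_eq_mul_mk'_one (p ^ n * c) s, map_mul, map_pow, mul_assoc]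
    haveI := IsDiscreteValuationRing.ofHasUnitMulPowIrreducibleFactorization hfact
    infer_instance

/-- Abstract core: over a localization `A` of `R` which is a PID, any finitely generated
submodule `N` of a torsion-free module contains a free submodule with the same localization. -/
theorem aux_exists_free_submodule {R A M L : Type*} [CommRing R] [IsDomain R] [CommRing A]
    [Algebra R A] [AddCommGroup M] [Module R M] [AddCommGroup L] [Module R L] [Module A L]
    [IsScalarTower R A L] (S : Submonoid R) [IsLocalization S A]
    (f : M →ₗ[R] L) [IsLocalizedModule S f]
    [IsPrincipalIdealRing A] [IsDomain A] [NoZeroSMulDivisors A L]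
    (hSle : S ≤ nonZeroDivisors R)
    (N : Submodule R M) (hN : N.FG) :
    ∃ F : Submodule R M, F ≤ N ∧ Module.Free R F ∧
      Submodule.localized' A S f F = Submodule.localized' A S f N := by
  classical
  obtain ⟨T, hT⟩ := hN
  have hNloc : Submodule.localized' A S f N = Submodule.span A (f '' (T : Set M)) := by
    rw [← hT]
    exact Submodule.localized'_span A S f _
  haveI : Module.Finite A (Submodule.localized' A S f N) := by
    rw [hNloc]
    exact Module.Finite.span_of_finite A (T.finite_toSet.image f)
  haveI : Module.Free A (Submodule.localized' A S f N) :=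
    Module.free_of_finite_type_torsion_free' (R := A)
      (M := ↥(Submodule.localized' A S f N))
  set ι := Module.Free.ChooseBasisIndex A (Submodule.localized' A S f N) with hι
  set b : Module.Basis ι A (Submodule.localized' A S f N) := Module.Free.chooseBasis A _ with hb
  have hmem : ∀ i : ι, ∃ v ∈ N, ∃ s : S,
      IsLocalizedModule.mk' f v s = ((b i : Submodule.localized' A S f N) : L) :=
    fun i => (Submodule.mem_localized' A S f N _).mp (b i).2
  choose v hv s hs using hmem
  refine ⟨Submodule.span R (Set.range v), ?_, ?_, ?_⟩
  · rw [Submodule.span_le]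
    rintro _ ⟨i, rfl⟩
    exact hv i
  · -- freeness: the v i are linearly independent
    have hbL : LinearIndependent A
        (fun i => ((b i : Submodule.localized' A S f N) : L)) :=
      b.linearIndependent.map' (Submodule.localized' A S f N).subtype
        (Submodule.ker_subtype _)
    have hfv : ∀ i, f (v i)
        = ((s i : R) • ((b i : Submodule.localized' A S f N) : L)) := by
      intro i
      rw [← hs i, ← Submonoid.smul_def, IsLocalizedModule.mk'_cancel']
    have hAfv : LinearIndependent A (fun i => f (v i)) := by
      have h2 := hbL.units_smul (fun i => (IsLocalization.map_units A (s i)).unit)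
      convert h2 using 1
      funext i
      rw [hfv i]
      show ((s i : R) • _ : L) = ((IsLocalization.map_units A (s i)).unit : A) • _
      rw [IsUnit.unit_spec, algebraMap_smul]
    have hRfv : LinearIndependent R (fun i => f (v i)) := by
      refine hAfv.restrict_scalars ?_
      intro r r' h
      simp only [Algebra.smul_def, mul_one] at h
      exact IsLocalization.injective A hSle h
    have hvind : LinearIndependent R v := LinearIndependent.of_comp f hRfv
    exact Module.Free.of_basis (Module.Basis.span hvind)
  · -- equality of localizations
    rw [Submodule.localized'_span]
    apply le_antisymm
    · rw [Submodule.span_le]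
      rintro _ ⟨_, ⟨i, rfl⟩, rfl⟩
      exact (Submodule.mem_localized' A S f N _).mpr
        ⟨v i, hv i, 1, IsLocalizedModule.mk'_one S f (v i)⟩
    · have hrange : Submodule.localized' A S f N
          = Submodule.span A (Set.range
              fun i => ((b i : Submodule.localized' A S f N) : L)) := by
        conv_lhs => rw [← Submodule.map_subtype_top (Submodule.localized' A S f N),
          ← b.span_eq]
        rw [Submodule.map_span]
        congr 1
        ext x
        simp [Set.range_comp]
      rw [hrange, Submodule.span_le]
      rintro _ ⟨i, rfl⟩
      show ((b i : Submodule.localized' A S f N) : L)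
        ∈ (Submodule.span A (f '' Set.range v) : Set L)
      have hbi : ((b i : Submodule.localized' A S f N) : L)
          = IsLocalization.mk' A (1 : R) (s i) • f (v i) := by
        rw [← hs i, ← IsLocalizedModule.mk'_one S f (v i),
          IsLocalizedModule.mk'_smul_mk' A, one_smul, mul_one]
      rw [hbi]
      exact Submodule.smul_mem _ _ (Submodule.subset_span ⟨v i, ⟨i, rfl⟩, rfl⟩)

/-- Torsion-freeness of the localized module of a torsion-free module over a domain. -/
theorem aux_noZeroSMulDivisors {R M : Type*} [CommRing R] [IsDomain R]
    [AddCommGroup M] [Module R M] [NoZeroSMulDivisors R M]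
    (S : Submonoid R) (hS0 : (0 : R) ∉ S) :
    NoZeroSMulDivisors (Localization S) (LocalizedModule S M) := by
  refine ⟨fun {a x} h => ?_⟩
  obtain ⟨r, s, rfl⟩ := IsLocalization.exists_mk'_eq S a
  obtain ⟨⟨w, t⟩, rfl⟩ := Quotient.exists_rep x
  have hx : (Quotient.mk _ (w, t) : LocalizedModule S M) = LocalizedModule.mk w t := rfl
  rw [hx] at h ⊢
  rw [← Localization.mk_eq_mk'_apply, LocalizedModule.mk_smul_mk] at h
  rw [show (0 : LocalizedModule S M) = LocalizedModule.mk (0 : M) 1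
      from (LocalizedModule.zero_mk 1).symm,
    LocalizedModule.mk_eq] at h
  obtain ⟨u, hu⟩ := h
  simp only [smul_zero, Submonoid.smul_def, one_smul] at hu
  rw [← mul_smul] at hu
  rcases smul_eq_zero.mp hu with h0 | h0
  · rcases mul_eq_zero.mp h0 with h1 | h1
    · exact absurd (h1 ▸ u.2) hS0
    · left
      rw [h1, IsLocalization.mk'_zero]
  · right
    rw [h0, LocalizedModule.zero_mk]

end Aux

/-- **Lemma 4.3.** If `R` is a UFD, `(p)` a principal prime ideal, and
`N ⊆ R^m` a finitely generated submodule, then there is a free submodule `F ⊆ N` whose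
localization at `(p)` equals that of `N`. -/
theorem exists_free_submodule_with_same_localization
    (R : Type*) [CommRing R] [IsDomain R] [UniqueFactorizationMonoid R]
    (p : R) [hP : (Ideal.span {p}).IsPrime] (m : ℕ)
    (N : Submodule R (Fin m → R)) (hN : N.FG) :
    ∃ F : Submodule R (Fin m → R), F ≤ N ∧ Module.Free R F ∧
      Submodule.localized (Ideal.span {p}).primeCompl F =
        Submodule.localized (Ideal.span {p}).primeCompl N := by
  have hS0 : (0 : R) ∉ (Ideal.span {p}).primeCompl := fun h => h (Ideal.zero_mem _)
  have hSle : (Ideal.span {p}).primeCompl ≤ nonZeroDivisors R :=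
    le_nonZeroDivisors_of_noZeroDivisors hS0
  haveI : IsDomain (Localization (Ideal.span {p}).primeCompl) :=
    IsLocalization.isDomain_of_le_nonZeroDivisors (M := (Ideal.span {p}).primeCompl)
      (S := Localization (Ideal.span {p}).primeCompl) hSle
  haveI : IsPrincipalIdealRing (Localization (Ideal.span {p}).primeCompl) :=
    aux_isPrincipalIdealRing_localization p
  haveI : NoZeroSMulDivisors (Localization (Ideal.span {p}).primeCompl)
      (LocalizedModule (Ideal.span {p}).primeCompl (Fin m → R)) :=
    aux_noZeroSMulDivisors _ hS0
  exact aux_exists_free_submodule (Ideal.span {p}).primeCompl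
    (LocalizedModule.mkLinearMap (Ideal.span {p}).primeCompl (Fin m → R)) hSle N hN
end

section
/- Let (R, m) be a local ring that is a unique factorization domain with fraction field Q, and ρ : A → B a homomorphism of finite free R-modules with depth_m(coker ρ) > 0. Then there exist a finite free R-module C and a homomorphism θ : B → C such that (i) ker ρ = ker(θρ), (ii) coker(θρ) is zero or has positive m-depth, and (iii) (coker θρ) ⊗_R Q = 0. -/
open UniqueFactorizationMonoid

section RelPrime
variable {R : Type*} [CommRing R] [IsDomain R] [UniqueFactorizationMonoid R]

def relPrimeSubmonoid (r : R) : Submonoid R where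
  carrier := {s | IsRelPrime s r}
  one_mem' := isRelPrime_one_left
  mul_mem' := fun ha hb => ha.mul_left hb

theorem mem_relPrimeSubmonoid {r s : R} : s ∈ relPrimeSubmonoid r ↔ IsRelPrime s r := Iff.rfl

theorem isRelPrime_of_no_common_prime {r a : R} (hr : r ≠ 0)
    (h : ∀ q : R, Prime q → q ∣ a → ¬ q ∣ r) : IsRelPrime a r := by
  intro d hda hdr
  by_contra hu
  have hd0 : d ≠ 0 := fun h0 => hr (by simpa [h0] using hdr)
  obtain ⟨q, hqirr, hqd⟩ := WfDvdMonoid.exists_irreducible_factor hu hd0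
  exact h q (irreducible_iff_prime.mp hqirr) (hqd.trans hda) (hqd.trans hdr)

theorem relPrimeSubmonoid_le_nonZeroDivisors {r : R} (hru : ¬ IsUnit r) :
    relPrimeSubmonoid r ≤ nonZeroDivisors R := by
  intro s hs
  refine mem_nonZeroDivisors_of_ne_zero fun h0 => hru ?_
  rw [h0] at hs
  exact isRelPrime_zero_left.mp hs

variable {r : R} (hr0 : r ≠ 0) (hru : ¬ IsUnit r)

local notation "S'" => relPrimeSubmonoid r
local notation "L" => Localization (relPrimeSubmonoid r)

theorem not_dvd_of_relPrime {p s : R} (hp : p ∈ factors r) (hs : s ∈ S') : ¬ p ∣ s := by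
  intro hdvd
  exact ((prime_of_factor p hp).not_unit) (hs hdvd (dvd_of_mem_factors hp))

include hr0 hru in
theorem exists_factor_of_nonunit {z : L} (hz : ¬ IsUnit z) :
    ∃ p ∈ factors r, z ∈ Ideal.map (algebraMap R L) (Ideal.span {p}) := by
  obtain ⟨a, s, rfl⟩ := IsLocalization.exists_mk'_eq S' z
  by_cases ha0 : a = 0
  · obtain ⟨p, hp⟩ := exists_mem_factors hr0 hru
    exact ⟨p, hp, by simp [ha0, IsLocalization.mk'_zero]⟩
  by_cases hq : ∃ q : R, Prime q ∧ q ∣ a ∧ q ∣ r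
  · obtain ⟨q, hqp, hqa, hqr⟩ := hq
    obtain ⟨p, hpmem, hassoc⟩ := exists_mem_factors_of_dvd hr0 hqp.irreducible hqr
    obtain ⟨a', rfl⟩ := hqa
    obtain ⟨u, hu⟩ := hassoc.symm    -- p * u = q
    refine ⟨p, hpmem, ?_⟩
    have : IsLocalization.mk' (Localization S') (q * a') s
        = algebraMap R L p * (algebraMap R L (u : R) * IsLocalization.mk' (Localization S') a' s) := by
      rw [← hu]
      rw [← IsLocalization.mk'_one (M := S') (Localization S') p,
        ← IsLocalization.mk'_one (M := S') (Localization S') (u : R)]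
      rw [← IsLocalization.mk'_mul, ← IsLocalization.mk'_mul]
      simp [mul_assoc]
    rw [this, Ideal.map_span, Set.image_singleton]
    exact Ideal.mul_mem_right _ _ (Ideal.subset_span rfl)
  · exfalso
    push_neg at hq
    have haS : a ∈ S' := isRelPrime_of_no_common_prime hr0 (fun q h1 h2 => hq q h1 h2)
    exact hz (by
      have := IsLocalization.mk'_mul_mk'_eq_one (M := S') (S := Localization S') ⟨a, haS⟩ s
      exact IsUnit.of_mul_eq_one _ this)

include hru in
theorem algebraMap_not_mem_map_span {p y : R} (hp : p ∈ factors r) (hpy : ¬ p ∣ y) :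
    algebraMap R L y ∉ Ideal.map (algebraMap R L) (Ideal.span {p}) := by
  intro hmem
  rw [IsLocalization.mem_map_algebraMap_iff S'] at hmem
  obtain ⟨⟨x, s⟩, hx⟩ := hmem
  rw [← map_mul] at hx
  have := IsLocalization.injective (Localization S') (relPrimeSubmonoid_le_nonZeroDivisors hru) hx
  have hdvd : p ∣ y * (s : R) := this ▸ Ideal.mem_span_singleton.mp x.2
  rcases (prime_of_factor p hp).dvd_or_dvd hdvd with h | h
  · exact hpy h
  · exact not_dvd_of_relPrime hp s.2 h

include hru in
theorem isPrime_map_span {p : R} (hp : p ∈ factors r) :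
    (Ideal.map (algebraMap R L) (Ideal.span {p})).IsPrime := by
  refine IsLocalization.isPrime_of_isPrime_disjoint S' _ _
    ((Ideal.span_singleton_prime (prime_of_factor p hp).ne_zero).mpr (prime_of_factor p hp)) ?_
  rw [Set.disjoint_iff]
  rintro s ⟨hs1, hs2⟩
  exact not_dvd_of_relPrime hp hs1 (Ideal.mem_span_singleton.mp hs2)

include hr0 hru in
theorem isPrincipalIdealRing_localization_relPrime :
    IsPrincipalIdealRing (Localization (relPrimeSubmonoid r)) := by
  classical
  apply IsPrincipalIdealRing.of_prime
  intro P hP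
  by_cases hbot : P = ⊥
  · exact ⟨⟨0, by rw [hbot]; exact (Submodule.span_zero_singleton _).symm⟩⟩
  have hsub : (P : Set (Localization S')) ⊆
      ⋃ p ∈ (factors r).toFinset, ((Ideal.map (algebraMap R L) (Ideal.span {p}) : Ideal L) : Set L) := by
    intro z hz
    have hzu : ¬ IsUnit z := fun h => hP.ne_top (P.eq_top_of_isUnit_mem hz h)
    obtain ⟨p, hpm, hmem⟩ := exists_factor_of_nonunit hr0 hru hzu
    exact Set.mem_biUnion (Multiset.mem_toFinset.mpr hpm) hmem
  have hprime : ∀ p ∈ (factors r).toFinset, p ≠ r → p ≠ r →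
      (Ideal.map (algebraMap R L) (Ideal.span {p})).IsPrime :=
    fun p hp _ _ => isPrime_map_span hru (Multiset.mem_toFinset.mp hp)
  obtain ⟨p₀, hp₀m, hle⟩ := (Ideal.subset_union_prime r r hprime).mp hsub
  have hp₀ : p₀ ∈ factors r := Multiset.mem_toFinset.mp hp₀m
  -- find a prime of R whose image lies in P
  obtain ⟨z₀, hz₀P, hz₀ne⟩ := Submodule.exists_mem_ne_zero_of_ne_bot hbot
  obtain ⟨a, s, rfl⟩ := IsLocalization.exists_mk'_eq S' z₀
  have ha0 : a ≠ 0 := by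
    rintro rfl
    exact hz₀ne (IsLocalization.mk'_zero _)
  have haP : algebraMap R L a ∈ P := by
    rw [← IsLocalization.mk'_spec (Localization S') a s]
    exact Ideal.mul_mem_right _ _ hz₀P
  have haprod : algebraMap R L ((factors a).prod) ∈ P := by
    obtain ⟨u, hu⟩ := factors_prod ha0
    have : algebraMap R L ((factors a).prod) * algebraMap R L (u : R) ∈ P := by
      rw [← map_mul, hu]; exact haP
    rcases hP.mem_or_mem this with h | h
    · exact h
    · exact absurd (P.eq_top_of_isUnit_mem h ((u.isUnit).map (algebraMap R L))) hP.ne_top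
  have : ∃ qL ∈ (factors a).map (algebraMap R L), qL ∈ P := by
    rw [← hP.multiset_prod_mem_iff_exists_mem]
    rwa [← map_multiset_prod]
  obtain ⟨qL, hqLm, hqLP⟩ := this
  obtain ⟨q, hqfa, rfl⟩ := Multiset.mem_map.mp hqLm
  have hq : Prime q := prime_of_factor q hqfa
  -- p₀ divides q
  have hqp₀L : algebraMap R L q ∈ Ideal.map (algebraMap R L) (Ideal.span {p₀}) := hle hqLP
  have hp₀q : p₀ ∣ q := by
    rw [IsLocalization.mem_map_algebraMap_iff S'] at hqp₀L
    obtain ⟨⟨x, s'⟩, hx⟩ := hqp₀L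
    rw [← map_mul] at hx
    have heq := IsLocalization.injective (Localization S')
      (relPrimeSubmonoid_le_nonZeroDivisors hru) hx
    have hdvd : p₀ ∣ q * (s' : R) := heq ▸ Ideal.mem_span_singleton.mp x.2
    rcases (prime_of_factor p₀ hp₀).dvd_or_dvd hdvd with h | h
    · exact h
    · exact absurd h (not_dvd_of_relPrime hp₀ s'.2)
  have hassoc : Associated p₀ q := by
    obtain ⟨c, rfl⟩ := hp₀q
    rcases hq.irreducible.isUnit_or_isUnit rfl with h | h
    · exact absurd h (prime_of_factor p₀ hp₀).not_unit
    · exact associated_mul_unit_right _ _ h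
  have hp₀P : algebraMap R L p₀ ∈ P := by
    obtain ⟨u, hu⟩ := hassoc
    have : algebraMap R L p₀ = algebraMap R L q * algebraMap R L ((u⁻¹ : Rˣ) : R) := by
      rw [← map_mul]
      congr 1
      calc p₀ = p₀ * (u * (u⁻¹ : Rˣ)) := by simp
        _ = (p₀ * u) * (u⁻¹ : Rˣ) := by ring
        _ = q * (u⁻¹ : Rˣ) := by rw [hu]
    rw [this]
    exact Ideal.mul_mem_right _ _ hqLP
  refine ⟨⟨algebraMap R L p₀, le_antisymm ?_ ?_⟩⟩
  · refine hle.trans ?_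
    rw [Ideal.map_span, Set.image_singleton]
  · show Ideal.span _ ≤ P
    rw [Ideal.span_le, Set.singleton_subset_iff]
    exact hp₀P



include hr0 hru in
theorem exists_good_family {ι κ : Type*} [Fintype ι] [Fintype κ] (row : κ → ι → R) :
    ∃ (k : ℕ) (g : Fin k → ι → R),
      (∀ i, g i ∈ Submodule.span R (Set.range row)) ∧
      LinearIndependent R g ∧
      (∀ β, ∃ s : R, IsRelPrime s r ∧ ∃ c : Fin k → R,
        s • row β = ∑ i, c i • g i) := by
  classical
  have hle := relPrimeSubmonoid_le_nonZeroDivisors hru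
  haveI : IsDomain (Localization S') :=
    IsLocalization.isDomain_localization hle
  haveI : IsPrincipalIdealRing (Localization S') :=
    isPrincipalIdealRing_localization_relPrime hr0 hru
  set j : (ι → R) →ₗ[R] (ι → L) := LinearMap.compLeft (Algebra.linearMap R L) ι with hjdef
  have hjapp : ∀ (v : ι → R) (x : ι), j v x = algebraMap R L (v x) := fun v x => rfl
  have hjinj : Function.Injective j := fun v w h => funext fun x =>
    IsLocalization.injective (Localization S') hle (congrFun (congrArg (fun f => f) h) x)
  set W : Submodule (Localization S') (ι → L) :=
    Submodule.span (Localization S') (Set.range fun β => j (row β)) with hWdef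
  obtain ⟨k, w⟩ := Submodule.basisOfPid (Pi.basisFun (Localization S') ι) W
  have hwmem : ∀ i, (w i : ι → L) ∈ W := fun i => (w i).2
  have hqex : ∀ i, ∃ q : κ → Localization S',
      ∑ β, q β • j (row β) = (w i : ι → L) := by
    intro i
    exact (Submodule.mem_span_range_iff_exists_fun (Localization S')).mp (hwmem i)
  choose q hq using hqex
  have hsex : ∀ i, ∃ b : S', ∀ β ∈ Finset.univ, IsLocalization.IsInteger R (b • q i β) :=
    fun i => IsLocalization.exist_integer_multiples S' Finset.univ (q i)
  choose s hs using hsex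
  have hdex : ∀ i (β : κ), ∃ dd : R, algebraMap R L dd = ((s i : R)) • q i β := by
    intro i β
    obtain ⟨dd, hdd⟩ := hs i β (Finset.mem_univ β)
    exact ⟨dd, by rw [hdd, Submonoid.smul_def]⟩
  choose d hd using hdex
  refine ⟨k, fun i => ∑ β, d i β • row β, ?_, ?_, ?_⟩
  · intro i
    exact Submodule.sum_mem _ fun β _ =>
      Submodule.smul_mem _ _ (Submodule.subset_span ⟨β, rfl⟩)
  · -- linear independence
    have hjg : ∀ i, j (∑ β, d i β • row β) = (s i : R) • (w i : ι → L) := by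
      intro i
      rw [map_sum]
      calc ∑ β, j (d i β • row β)
          = ∑ β, algebraMap R L (d i β) • j (row β) := by
            refine Finset.sum_congr rfl fun β _ => ?_
            rw [map_smul, algebraMap_smul]
        _ = ∑ β, ((s i : R) • q i β) • j (row β) := by
            refine Finset.sum_congr rfl fun β _ => ?_
            rw [hd]
        _ = (s i : R) • ∑ β, q i β • j (row β) := by
            rw [Finset.smul_sum]
            refine Finset.sum_congr rfl fun β _ => ?_
            rw [smul_assoc]
        _ = (s i : R) • (w i : ι → L) := by rw [hq]
    rw [Fintype.linearIndependent_iff]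
    intro c hc i
    have h1 : j (∑ i', c i' • ∑ β, d i' β • row β) = 0 := by rw [hc, map_zero]
    rw [map_sum] at h1
    have h2 : ∑ i', (algebraMap R L (c i' * (s i' : R))) • (w i' : ι → L) = 0 := by
      rw [← h1]
      refine (Finset.sum_congr rfl fun i' _ => ?_).symm
      rw [map_smul, hjg, algebraMap_smul, smul_smul, ← algebraMap_smul (Localization S')
        (c i' * (s i' : R)), map_mul, Algebra.smul_def]
    have h3 : ∑ i', (algebraMap R L (c i' * (s i' : R))) • w i' = (0 : W) := by
      apply Subtype.ext
      push_cast
      rw [← h2]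
      exact Finset.sum_congr rfl fun i' _ => by rw [map_mul]
    have h4 := Fintype.linearIndependent_iff.mp w.linearIndependent _ h3 i
    have hs0 : algebraMap R L ((s i : R)) ≠ 0 := by
      intro h0
      have := IsLocalization.injective (Localization S') hle (h0.trans (map_zero _).symm)
      exact nonZeroDivisors.ne_zero (hle (s i).2) this
    have : algebraMap R L (c i) * algebraMap R L ((s i : R)) = 0 := by
      rw [← map_mul]; exact h4
    have hc0 : algebraMap R L (c i) = 0 := by
      rcases mul_eq_zero.mp this with h | h
      · exact h
      · exact absurd h hs0
    have := IsLocalization.injective (Localization S') hle (hc0.trans (map_zero _).symm)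
    exact this
  · -- spanning up to relprime scalar
    intro β
    have hjg : ∀ i, j (∑ β', d i β' • row β') = (s i : R) • (w i : ι → L) := by
      intro i
      rw [map_sum]
      calc ∑ β', j (d i β' • row β')
          = ∑ β', algebraMap R L (d i β') • j (row β') := by
            refine Finset.sum_congr rfl fun β' _ => ?_
            rw [map_smul, algebraMap_smul]
        _ = ∑ β', ((s i : R) • q i β') • j (row β') := by
            refine Finset.sum_congr rfl fun β' _ => ?_
            rw [hd]
        _ = (s i : R) • ∑ β', q i β' • j (row β') := by
            rw [Finset.smul_sum]
            refine Finset.sum_congr rfl fun β' _ => ?_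
            rw [smul_assoc]
        _ = (s i : R) • (w i : ι → L) := by rw [hq]
    have hmem : j (row β) ∈ W := Submodule.subset_span ⟨β, rfl⟩
    have hWspan : W = Submodule.span (Localization S')
        (Set.range fun i => (w i : ι → L)) := by
      conv_lhs => rw [← Submodule.map_subtype_top W, ← w.span_eq, Submodule.map_span]
      congr 1
      ext v
      constructor
      · rintro ⟨u, ⟨i, rfl⟩, rfl⟩; exact ⟨i, rfl⟩
      · rintro ⟨i, rfl⟩; exact ⟨w i, ⟨i, rfl⟩, rfl⟩
    rw [hWspan] at hmem
    obtain ⟨q', hq'⟩ := (Submodule.mem_span_range_iff_exists_fun (Localization S')).mp hmem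
    -- multiply by the product of all the s i
    set sP : S' := ∏ i, s i with hsPdef
    have hsP : ∀ i : Fin k, (sP : R) = (∏ i' ∈ Finset.univ.erase i, (s i' : R)) * (s i : R) := by
      intro i
      rw [hsPdef]
      push_cast
      rw [Finset.prod_erase_mul _ _ (Finset.mem_univ i)]
    have key : (sP : R) • j (row β)
        = ∑ i, (q' i * algebraMap R L (∏ i' ∈ Finset.univ.erase i, (s i' : R))) • j (∑ β', d i β' • row β') := by
      rw [← hq', Finset.smul_sum]
      refine Finset.sum_congr rfl fun i _ => ?_
      rw [hjg i, mul_smul, algebraMap_smul, smul_smul, ← hsP i]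
      exact smul_comm _ _ _
    obtain ⟨t, ht⟩ := IsLocalization.exist_integer_multiples S' Finset.univ
      (fun i : Fin k => q' i * algebraMap R (Localization S')
        (∏ i' ∈ Finset.univ.erase i, (s i' : R)))
    have hc'ex : ∀ i : Fin k, ∃ cc : R, algebraMap R (Localization S') cc
        = (t : R) • (q' i * algebraMap R (Localization S')
            (∏ i' ∈ Finset.univ.erase i, (s i' : R))) := by
      intro i
      obtain ⟨cc, hcc⟩ := ht i (Finset.mem_univ i)
      exact ⟨cc, hcc⟩
    choose c' hc' using hc'ex
    refine ⟨(t : R) * (sP : R), mul_mem t.2 sP.2, c', ?_⟩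
    apply hjinj
    rw [map_smul, map_sum, mul_smul, key, Finset.smul_sum]
    refine Finset.sum_congr rfl fun i _ => ?_
    rw [map_smul, ← algebraMap_smul (Localization S') (c' i) (j (∑ β' : κ, d i β' • row β')), hc' i, smul_assoc]
  
end RelPrime


theorem subsingleton_tensor_of_torsion {R : Type*} [CommRing R] [IsDomain R]
    (M : Type*) [AddCommGroup M] [Module R M]
    (h : ∀ m : M, ∃ c : R, c ≠ 0 ∧ c • m = 0) :
    Subsingleton (TensorProduct R (FractionRing R) M) := by
  refine subsingleton_of_forall_eq 0 fun z => ?_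
  induction z using TensorProduct.induction_on with
  | zero => rfl
  | tmul q m =>
      obtain ⟨c, hc0, hcm⟩ := h m
      have hcQ : algebraMap R (FractionRing R) c ≠ 0 := fun hh =>
        hc0 (IsFractionRing.injective R (FractionRing R) (hh.trans (map_zero _).symm))
      calc q ⊗ₜ[R] m
          = (c • (q * (algebraMap R (FractionRing R) c)⁻¹)) ⊗ₜ[R] m := by
            congr 1
            rw [Algebra.smul_def]
            field_simp
        _ = (q * (algebraMap R (FractionRing R) c)⁻¹) ⊗ₜ[R] (c • m) := by
            rw [TensorProduct.smul_tmul]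
        _ = 0 := by rw [hcm, TensorProduct.tmul_zero]
  | add x y hx hy => rw [hx, hy, add_zero]

open Matrix in
theorem exists_scalar_single {R : Type*} [CommRing R] [IsDomain R] {ι : Type*} [Fintype ι]
    {k : ℕ} (g : Fin k → ι → R) (hg : LinearIndependent R g) (i₀ : Fin k) :
    ∃ s : R, s ≠ 0 ∧ ∃ y : ι → R, ∀ i, ∑ x, g i x * y x = s * (if i = i₀ then 1 else 0) := by
  classical
  have hQind : LinearIndependent (FractionRing R)
      (fun i => (fun x => algebraMap R (FractionRing R) (g i x)) : Fin k → ι → FractionRing R) := by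
    rw [Fintype.linearIndependent_iff]
    intro c hc i
    obtain ⟨s, hs⟩ := IsLocalization.exist_integer_multiples (nonZeroDivisors R) Finset.univ c
    have hdex : ∀ i', ∃ a : R, algebraMap R (FractionRing R) a = (s : R) • c i' := by
      intro i'
      obtain ⟨a, ha⟩ := hs i' (Finset.mem_univ i')
      exact ⟨a, ha⟩
    choose a ha using hdex
    have h1 : ∀ x : ι, algebraMap R (FractionRing R) (∑ i', a i' * g i' x) = 0 := by
      intro x
      have h3 := congrFun hc x
      rw [Finset.sum_apply] at h3
      have h2 : ∑ i', c i' * algebraMap R (FractionRing R) (g i' x) = 0 := by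
        simpa [smul_eq_mul] using h3
      rw [map_sum]
      calc ∑ i', algebraMap R (FractionRing R) (a i' * g i' x)
          = ∑ i', ((s : R) • c i') * algebraMap R (FractionRing R) (g i' x) := by
            refine Finset.sum_congr rfl fun i' _ => by rw [_root_.map_mul, ha]
        _ = (s : R) • ∑ i', c i' * algebraMap R (FractionRing R) (g i' x) := by
            rw [Finset.smul_sum]
            exact Finset.sum_congr rfl fun i' _ => (smul_mul_assoc _ _ _)
        _ = 0 := by rw [h2, smul_zero]
    have h4 : ∑ i', a i' • g i' = 0 := by
      funext x
      have := IsFractionRing.injective R (FractionRing R) ((h1 x).trans (map_zero _).symm)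
      calc (∑ i', a i' • g i') x = ∑ i', a i' * g i' x := by
            rw [Finset.sum_apply]
            exact Finset.sum_congr rfl fun i' _ => rfl
        _ = 0 := this
    have h5 := Fintype.linearIndependent_iff.mp hg a h4 i
    have h6 : (s : R) • c i = 0 := by rw [← ha, h5, map_zero]
    have hs0 : algebraMap R (FractionRing R) (s : R) ≠ 0 := fun hh =>
      nonZeroDivisors.ne_zero s.2 (IsFractionRing.injective R (FractionRing R)
        (hh.trans (map_zero _).symm))
    rw [Algebra.smul_def] at h6
    rcases mul_eq_zero.mp h6 with h | h
    · exact absurd h hs0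
    · exact h
  set N : Matrix (Fin k) ι (FractionRing R) :=
    Matrix.of (fun i x => algebraMap R (FractionRing R) (g i x)) with hN
  have hτinj : Function.Injective (Matrix.mulVecLin Nᵀ) := by
    rw [← LinearMap.ker_eq_bot, LinearMap.ker_eq_bot']
    intro c hc
    have hzero : ∑ i, c i • (fun x => algebraMap R (FractionRing R) (g i x)) = 0 := by
      funext x
      have := congrFun hc x
      rw [Matrix.mulVecLin_apply] at this
      rw [Finset.sum_apply]
      calc ∑ i, (c i • fun x' => algebraMap R (FractionRing R) (g i x')) x
          = ∑ i, Nᵀ x i * c i := by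
            refine Finset.sum_congr rfl fun i _ => ?_
            simp [hN, Matrix.transpose_apply, mul_comm]
        _ = 0 := this
    exact funext (Fintype.linearIndependent_iff.mp hQind c hzero)
  have hrankT : Nᵀ.rank = k := by
    rw [Matrix.rank, LinearMap.finrank_range_of_inj hτinj]
    simp [Module.finrank_pi]
  have hrank : N.rank = k := by rw [← Matrix.rank_transpose]; exact hrankT
  have hsurj : Function.Surjective N.mulVecLin := by
    rw [← LinearMap.range_eq_top]
    apply Submodule.eq_top_of_finrank_eq
    rw [show Module.finrank (FractionRing R) (Fin k → FractionRing R) = k by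
      simp [Module.finrank_pi]]
    exact hrank
  obtain ⟨v, hv⟩ := hsurj (Pi.single i₀ 1)
  obtain ⟨s, hs⟩ := IsLocalization.exist_integer_multiples (nonZeroDivisors R) Finset.univ v
  have hyex : ∀ x : ι, ∃ yy : R, algebraMap R (FractionRing R) yy = (s : R) • v x := by
    intro x
    obtain ⟨yy, hyy⟩ := hs x (Finset.mem_univ x)
    exact ⟨yy, hyy⟩
  choose y hy using hyex
  refine ⟨(s : R), nonZeroDivisors.ne_zero s.2, y, fun i => ?_⟩
  apply IsFractionRing.injective R (FractionRing R)
  have hv' : N *ᵥ v = Pi.single i₀ 1 := by rw [← Matrix.mulVecLin_apply]; exact hv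
  have hNv : (∑ x, N i x * v x) = (Pi.single i₀ 1 : Fin k → FractionRing R) i := by
    rw [show (∑ x, N i x * v x) = (N *ᵥ v) i from rfl, hv']
  rw [map_sum]
  calc ∑ x, algebraMap R (FractionRing R) (g i x * y x)
      = (s : R) • ∑ x, N i x * v x := by
        rw [Finset.smul_sum]
        refine Finset.sum_congr rfl fun x _ => ?_
        rw [_root_.map_mul, hy x]
        simp only [hN, Matrix.of_apply]
        exact mul_smul_comm _ _ _
    _ = algebraMap R (FractionRing R) ((s : R) * (if i = i₀ then 1 else 0)) := by
        rw [hNv, Pi.single_apply, _root_.map_mul, Algebra.smul_def]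
        congr 1
        split
        · simp
        · simp

/-- Positivity of the `I`-depth of a module `M`: either `M = IM` (depth `+∞` by convention),
or there is a nonzerodivisor `r ∈ I` on `M` with `rM ≠ M`. -/
def IsDepthPos (R : Type*) [CommRing R] (I : Ideal R) (M : Type*) [AddCommGroup M]
    [Module R M] : Prop :=
  (I • (⊤ : Submodule R M) = ⊤) ∨
    ∃ r ∈ I, (∀ x : M, r • x = 0 → x = 0) ∧ Ideal.span {r} • (⊤ : Submodule R M) ≠ ⊤

/-- **Lemma 4.4.** Let `(R,m)` be a local UFD with fraction field `Q` and
`ρ : A → B` a homomorphism of finite free `R`-modules with `depth_m (coker ρ) > 0`. Then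
there are a finite free `R`-module `C` (realized as `Fin k → R`) and `θ : B → C` with
(i) `ker ρ = ker (θρ)`, (ii) `coker (θρ)` zero or of positive `m`-depth, and
(iii) `(coker θρ) ⊗ Q = 0`. -/
theorem exists_theta_reduction_to_torsion
    (R : Type*) [CommRing R] [IsDomain R] [UniqueFactorizationMonoid R] [IsLocalRing R]
    (A B : Type*) [AddCommGroup A] [Module R A] [Module.Finite R A] [Module.Free R A]
    [AddCommGroup B] [Module R B] [Module.Finite R B] [Module.Free R B]
    (ρ : A →ₗ[R] B)
    (hdepth : IsDepthPos R (IsLocalRing.maximalIdeal R) (B ⧸ LinearMap.range ρ)) :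
    ∃ (k : ℕ) (θ : B →ₗ[R] (Fin k → R)),
      LinearMap.ker ρ = LinearMap.ker (θ ∘ₗ ρ) ∧
      (Subsingleton ((Fin k → R) ⧸ LinearMap.range (θ ∘ₗ ρ)) ∨
        IsDepthPos R (IsLocalRing.maximalIdeal R)
          ((Fin k → R) ⧸ LinearMap.range (θ ∘ₗ ρ))) ∧
      Subsingleton (TensorProduct R (FractionRing R)
        ((Fin k → R) ⧸ LinearMap.range (θ ∘ₗ ρ))) := by

  classical
  haveI : Module.Finite R (B ⧸ LinearMap.range ρ) :=
    Module.Finite.of_surjective (LinearMap.range ρ).mkQ (Submodule.Quotient.mk_surjective _)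
  have hjac : IsLocalRing.maximalIdeal R ≤ (⊥ : Ideal R).jacobson := by
    rw [IsLocalRing.jacobson_eq_maximalIdeal (⊥ : Ideal R) bot_ne_top]
  set bA := Module.Free.chooseBasis R A with hbA
  set bB := Module.Free.chooseBasis R B with hbB
  rcases hdepth with hcase1 | ⟨r, hrm, hrnzd, hrne⟩
  · -- trivial case : coker ρ = 0
    have htop : (⊤ : Submodule R (B ⧸ LinearMap.range ρ)) = ⊥ :=
      Submodule.eq_bot_of_le_smul_of_le_jacobson_bot (IsLocalRing.maximalIdeal R) ⊤
        (Module.finite_def.mp inferInstance) hcase1.ge hjac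
    have hrange : LinearMap.range ρ = ⊤ := by
      rw [eq_top_iff]
      intro b _
      have h0 : (Submodule.Quotient.mk b : B ⧸ LinearMap.range ρ) = 0 :=
        (Submodule.eq_bot_iff _).mp htop _ Submodule.mem_top
      exact (Submodule.Quotient.mk_eq_zero _).mp h0
    set n := Fintype.card (Module.Free.ChooseBasisIndex R B) with hn
    set bB' := bB.reindex (Fintype.equivFin (Module.Free.ChooseBasisIndex R B)) with hbB'
    set θ : B →ₗ[R] (Fin n → R) := bB'.equivFun.toLinearMap with hθ
    have hθinj : Function.Injective θ := bB'.equivFun.injective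
    have hθsurj : Function.Surjective θ := bB'.equivFun.surjective
    have hrangeθ : LinearMap.range (θ ∘ₗ ρ) = ⊤ := by
      rw [LinearMap.range_comp, hrange, Submodule.map_top, LinearMap.range_eq_top]
      exact hθsurj
    have hsub : Subsingleton ((Fin n → R) ⧸ LinearMap.range (θ ∘ₗ ρ)) :=
      Submodule.Quotient.subsingleton_iff.mpr hrangeθ
    refine ⟨n, θ, ?_, Or.inl hsub, ?_⟩
    · ext a
      simp only [LinearMap.mem_ker, LinearMap.comp_apply]
      constructor
      · intro h; rw [h, map_zero]
      · intro h; exact hθinj (by rw [h, map_zero])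
    · exact subsingleton_tensor_of_torsion _ fun m =>
        ⟨1, one_ne_zero, by rw [one_smul]; exact Subsingleton.elim m 0⟩
  · -- main case
    have hr0 : r ≠ 0 := by
      rintro rfl
      apply hrne
      have hall : ∀ x : B ⧸ LinearMap.range ρ, x = 0 := fun x => hrnzd x (zero_smul _ x)
      have htop' : (⊤ : Submodule R (B ⧸ LinearMap.range ρ)) = ⊥ := by
        rw [Submodule.eq_bot_iff]; exact fun x _ => hall x
      rw [htop']
      simp
    have hru : ¬ IsUnit r := (IsLocalRing.mem_maximalIdeal r).mp hrm
    set row : Module.Free.ChooseBasisIndex R B → Module.Free.ChooseBasisIndex R A → R :=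
      fun β x => bB.repr (ρ (bA x)) β with hrowdef
    obtain ⟨k, g, hgspan, hgind, hgs⟩ := exists_good_family hr0 hru row
    have hdex : ∀ i, ∃ dcoef : Module.Free.ChooseBasisIndex R B → R,
        ∑ β, dcoef β • row β = g i := fun i =>
      (Submodule.mem_span_range_iff_exists_fun R).mp (hgspan i)
    choose dc hdc using hdex
    set θ : B →ₗ[R] (Fin k → R) := LinearMap.pi (fun i => ∑ β, dc i β • (bB.coord β)) with hθ
    set φ := θ ∘ₗ ρ with hφ
    have hθapp : ∀ (b : B) (i : Fin k), θ b i = ∑ β, dc i β * bB.repr b β := by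
      intro b i
      rw [hθ, LinearMap.pi_apply, LinearMap.sum_apply]
      exact Finset.sum_congr rfl fun β _ => by
        rw [LinearMap.smul_apply, Module.Basis.coord_apply, smul_eq_mul]
    have hrep : ∀ (a : A) β, bB.repr (ρ a) β = ∑ x, bA.repr a x * row β x := by
      intro a β
      have h1 : ρ a = ∑ x, bA.repr a x • ρ (bA x) := by
        conv_lhs => rw [← Module.Basis.sum_repr bA a]
        rw [map_sum]
        exact Finset.sum_congr rfl fun x _ => by rw [map_smul]
      rw [h1, map_sum, Finsupp.finset_sum_apply]
      exact Finset.sum_congr rfl fun x _ => by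
        rw [map_smul, Finsupp.smul_apply, smul_eq_mul, hrowdef]
    have hkey : ∀ (a : A) (i : Fin k), φ a i = ∑ x, bA.repr a x * g i x := by
      intro a i
      rw [hφ, LinearMap.comp_apply, hθapp]
      calc ∑ β, dc i β * bB.repr (ρ a) β
          = ∑ β, ∑ x, bA.repr a x * (dc i β * row β x) := by
            refine Finset.sum_congr rfl fun β _ => ?_
            rw [hrep a β, Finset.mul_sum]
            exact Finset.sum_congr rfl fun x _ => by ring
        _ = ∑ x, ∑ β, bA.repr a x * (dc i β * row β x) := Finset.sum_comm
        _ = ∑ x, bA.repr a x * g i x := by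
            refine Finset.sum_congr rfl fun x _ => ?_
            rw [← Finset.mul_sum]
            congr 1
            rw [← hdc i, Finset.sum_apply]
            exact Finset.sum_congr rfl fun β _ => rfl
    -- key divisibility computation
    have hcoordeq : ∀ (a : A) β (s : R) (c : Fin k → R),
        s • row β = ∑ i, c i • g i → s * bB.repr (ρ a) β = ∑ i, c i * φ a i := by
      intro a β s c hsc
      rw [hrep a β]
      calc s * ∑ x, bA.repr a x * row β x
          = ∑ x, bA.repr a x * (s • row β) x := by
            rw [Finset.mul_sum]
            exact Finset.sum_congr rfl fun x _ => by
              rw [Pi.smul_apply, smul_eq_mul]; ring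
        _ = ∑ x, bA.repr a x * ∑ i, c i * g i x := by
            refine Finset.sum_congr rfl fun x _ => ?_
            rw [hsc, Finset.sum_apply]
            simp [Pi.smul_apply, smul_eq_mul]
        _ = ∑ x, ∑ i, bA.repr a x * (c i * g i x) := by
            refine Finset.sum_congr rfl fun x _ => ?_
            rw [Finset.mul_sum]
        _ = ∑ i, ∑ x, bA.repr a x * (c i * g i x) := Finset.sum_comm
        _ = ∑ i, c i * ∑ x, bA.repr a x * g i x := by
            refine Finset.sum_congr rfl fun i _ => ?_
            rw [Finset.mul_sum]
            exact Finset.sum_congr rfl fun x _ => by ring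
        _ = ∑ i, c i * φ a i := by
            exact Finset.sum_congr rfl fun i _ => by rw [hkey a i]
    have hker : LinearMap.ker ρ = LinearMap.ker φ := by
      apply le_antisymm
      · intro a ha
        rw [LinearMap.mem_ker] at ha ⊢
        rw [hφ, LinearMap.comp_apply, ha, map_zero]
      · intro a ha
        rw [LinearMap.mem_ker] at ha ⊢
        have hc : ∀ β, bB.repr (ρ a) β = 0 := by
          intro β
          obtain ⟨s, hsrel, c, hsc⟩ := hgs β
          have hs0 : s ≠ 0 := by
            rintro rfl
            exact hru (isRelPrime_zero_left.mp hsrel)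
          have h1 : s * bB.repr (ρ a) β = 0 := by
            rw [hcoordeq a β s c hsc]
            refine Finset.sum_eq_zero fun i _ => ?_
            rw [ha]
            simp
          exact (mul_eq_zero.mp h1).resolve_left hs0
        have h2 : bB.repr (ρ a) = 0 := Finsupp.ext hc
        exact (LinearEquiv.map_eq_zero_iff bB.repr).mp h2
    have hmain : ∀ (xv : Fin k → R) (a : A), r • xv = φ a → ∃ a', φ a' = xv := by
      intro xv a hra
      have hdvd : ∀ β, r ∣ bB.repr (ρ a) β := by
        intro β
        obtain ⟨s, hsrel, c, hsc⟩ := hgs β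
        have h1 : s * bB.repr (ρ a) β = r * ∑ i, c i * xv i := by
          rw [hcoordeq a β s c hsc, Finset.mul_sum]
          refine Finset.sum_congr rfl fun i _ => ?_
          rw [← hra]
          simp only [Pi.smul_apply, smul_eq_mul]
          ring
        have h2 : r ∣ s * bB.repr (ρ a) β := Dvd.intro _ h1.symm
        exact (hsrel.symm : IsRelPrime r s).dvd_of_dvd_mul_left h2
      choose t ht using hdvd
      set b : B := ∑ β, t β • bB β with hb
      have hbrepr : ∀ β, bB.repr b β = t β := by
        intro β
        rw [hb]
        rw [show (bB.repr (∑ β', t β' • bB β')) = _ from congrArg _ rfl]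
        exact congrFun (bB.repr_sum_self t) β
      have hab : ρ a = r • b := by
        apply bB.repr.injective
        ext β
        rw [map_smul, Finsupp.smul_apply, smul_eq_mul, hbrepr β]
        exact ht β
      have hquot : (Submodule.Quotient.mk b : B ⧸ LinearMap.range ρ) = 0 := by
        apply hrnzd
        rw [← Submodule.Quotient.mk_smul, ← hab]
        exact (Submodule.Quotient.mk_eq_zero _).mpr (LinearMap.mem_range_self ρ a)
      obtain ⟨a', ha'⟩ := (Submodule.Quotient.mk_eq_zero _).mp hquot
      refine ⟨a', ?_⟩
      have h2 : r • φ a' = r • xv := by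
        calc r • φ a' = θ (r • ρ a') := by
              rw [hφ, LinearMap.comp_apply, map_smul]
          _ = θ (ρ a) := by rw [ha', ← hab]
          _ = r • xv := by rw [← LinearMap.comp_apply, ← hφ, ← hra]
      exact smul_right_injective _ hr0 h2
    have hsingle : ∀ i₀ : Fin k, ∃ s : R, s ≠ 0 ∧ ∃ a : A,
        φ a = s • (Pi.single i₀ 1 : Fin k → R) := by
      intro i₀
      obtain ⟨s, hs0, y, hy⟩ := exists_scalar_single g hgind i₀
      refine ⟨s, hs0, ∑ x, y x • bA x, ?_⟩
      funext i
      rw [hkey, bA.repr_sum_self]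
      calc ∑ x, y x * g i x = ∑ x, g i x * y x := by
            exact Finset.sum_congr rfl fun x _ => mul_comm _ _
        _ = s * (if i = i₀ then 1 else 0) := hy i
        _ = (s • (Pi.single i₀ 1 : Fin k → R)) i := by
            rw [Pi.smul_apply, Pi.single_apply, smul_eq_mul]
    have htor : ∀ z : Fin k → R, ∃ c : R, c ≠ 0 ∧ c • z ∈ LinearMap.range φ := by
      intro z
      choose sv hsv av hav using hsingle
      refine ⟨∏ i, sv i, Finset.prod_ne_zero_iff.mpr (fun i _ => hsv i), ?_⟩
      have heq : φ (∑ i, (z i * ∏ i' ∈ Finset.univ.erase i, sv i') • av i)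
          = (∏ i, sv i) • z := by
        rw [map_sum]
        have hz : ∑ i, z i • (Pi.single i 1 : Fin k → R) = z := by
          funext j
          rw [Finset.sum_apply]
          calc ∑ i, (z i • (Pi.single i 1 : Fin k → R)) j
              = ∑ i, z i * (if j = i then 1 else 0) := by
                exact Finset.sum_congr rfl fun i _ => by
                  rw [Pi.smul_apply, Pi.single_apply, smul_eq_mul]
            _ = z j := by simp
        calc ∑ i, φ ((z i * ∏ i' ∈ Finset.univ.erase i, sv i') • av i)
            = ∑ i, ((z i * ∏ i' ∈ Finset.univ.erase i, sv i') * sv i) •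
                (Pi.single i 1 : Fin k → R) := by
              refine Finset.sum_congr rfl fun i _ => ?_
              rw [map_smul, hav i, smul_smul, mul_assoc]
          _ = ∑ i, (∏ i', sv i') • (z i • (Pi.single i 1 : Fin k → R)) := by
              refine Finset.sum_congr rfl fun i _ => ?_
              rw [smul_smul]
              congr 1
              rw [mul_assoc, Finset.prod_erase_mul _ _ (Finset.mem_univ i), mul_comm]
          _ = (∏ i', sv i') • ∑ i, z i • (Pi.single i 1 : Fin k → R) := by
              rw [Finset.smul_sum]
          _ = (∏ i', sv i') • z := by rw [hz]
      exact ⟨_, heq⟩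
    refine ⟨k, θ, hker, ?_, ?_⟩
    · by_cases hC : ∀ u : (Fin k → R) ⧸ LinearMap.range φ, u = 0
      · exact Or.inl (subsingleton_of_forall_eq 0 hC)
      · refine Or.inr (Or.inr ⟨r, hrm, ?_, ?_⟩)
        · intro u hu
          obtain ⟨z, rfl⟩ := Submodule.Quotient.mk_surjective _ u
          rw [← Submodule.Quotient.mk_smul] at hu
          obtain ⟨a, ha⟩ := (Submodule.Quotient.mk_eq_zero _).mp hu
          obtain ⟨a', ha'⟩ := hmain z a ha.symm
          exact (Submodule.Quotient.mk_eq_zero _).mpr ⟨a', ha'⟩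
        · intro hsmul
          apply hC
          haveI : Module.Finite R ((Fin k → R) ⧸ LinearMap.range φ) :=
            Module.Finite.of_surjective (LinearMap.range φ).mkQ
              (Submodule.Quotient.mk_surjective _)
          have hle : Ideal.span {r} ≤ (⊥ : Ideal R).jacobson :=
            le_trans ((Ideal.span_le).mpr (Set.singleton_subset_iff.mpr hrm)) hjac
          have htop : (⊤ : Submodule R ((Fin k → R) ⧸ LinearMap.range φ)) = ⊥ :=
            Submodule.eq_bot_of_le_smul_of_le_jacobson_bot (Ideal.span {r}) ⊤
              (Module.finite_def.mp inferInstance) hsmul.ge hle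
          intro u
          exact (Submodule.eq_bot_iff _).mp htop u Submodule.mem_top
    · apply subsingleton_tensor_of_torsion
      intro m
      obtain ⟨z, rfl⟩ := Submodule.Quotient.mk_surjective _ m
      obtain ⟨c, hc0, hcz⟩ := htor z
      exact ⟨c, hc0, by
        rw [← Submodule.Quotient.mk_smul]
        exact (Submodule.Quotient.mk_eq_zero _).mpr hcz⟩
end
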